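/- Let X = {0,1}^ω be the Cantor space, x a fixed injective enumeration of the finitely supported elements of X with x_0 the identically-zero sequence, and let W be a nonempty subset of X such that the ideal I_W has the hereditary Baire property. Then the following are equivalent: (i) W is not closed in X; (ii) ∅×Fin ≤_RB I_W; (iii) I_W, viewed as a subset of the Cantor space via characteristic functions, is Π⁰₃-hard; (iv) every Σ⁰₂ (Fσ) subset of X belongs to 𝓛_X(I_W). -/

import Mathlib

open Set Topology MeasureTheory

/-- An ideal on `Z`: a family of subsets of `Z` closed under subsets and finite unions. -/
def IsIdeal {Z : Type*} (I : Set (Set Z)) : Prop :=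
  (∀ A B : Set Z, A ⊆ B → B ∈ I → A ∈ I) ∧ ∀ A B : Set Z, A ∈ I → B ∈ I → A ∪ B ∈ I

/-- An ideal is admissible if `Z ∉ I` and `I` contains all finite sets. -/
def IsAdmissible {Z : Type*} (I : Set (Set Z)) : Prop :=
  (Set.univ : Set Z) ∉ I ∧ ∀ A : Set Z, A.Finite → A ∈ I

/-- The subsequence of `x` indexed by the (infinite) set `A` converges to `η`:
all but finitely many of the indices in `A` give values inside any neighbourhood of `η`. -/
def ConvAlong {Z X : Type*} [TopologicalSpace X] (x : Z → X) (A : Set Z) (η : X) : Prop :=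
  ∀ U ∈ nhds η, {n ∈ A | x n ∉ U}.Finite

/-- The set `Λ_x(I)` of `I`-limit points of the sequence `x`. -/
def LambdaSet {Z X : Type*} [TopologicalSpace X] (x : Z → X) (I : Set (Set Z)) : Set X :=
  {η | ∃ A : Set Z, A ∉ I ∧ A.Infinite ∧ ConvAlong x A η}

/-- The family `𝓛_X(I)` of all sets of `I`-limit points of sequences in `X`, plus `∅`. -/
def LimitFamily (Z : Type*) (X : Type*) [TopologicalSpace X] (I : Set (Set Z)) : Set (Set X) :=
  {S | ∃ x : Z → X, S = LambdaSet x I} ∪ {∅}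

/-- The Fubini product of two ideals. -/
def FubiniProd {Z W : Type*} (I : Set (Set Z)) (J : Set (Set W)) : Set (Set (Z × W)) :=
  {S | {n : Z | {k : W | (n, k) ∈ S} ∉ J} ∈ I}

/-- The ideal `Fin` of finite subsets. -/
def FinIdeal (Z : Type*) : Set (Set Z) := {A : Set Z | A.Finite}

/-- Identification of a family of subsets of `Z` with a subset of the Cantor space
`Z → Bool` via characteristic functions. -/
def chiSet {Z : Type*} (I : Set (Set Z)) : Set (Z → Bool) :=
  {f | {n : Z | f n = true} ∈ I}

/-- Finite Borel pointclasses: `SigmaClass X n` is `Σ⁰_n` for `n ≥ 1`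
(`Σ⁰₁` = open sets, `Σ⁰_{n+1}` = countable unions of complements of `Σ⁰_n` sets). -/
def SigmaClass (X : Type*) [TopologicalSpace X] : ℕ → Set (Set X)
  | 0 => ∅
  | 1 => {s | IsOpen s}
  | (n + 2) => {s | ∃ f : ℕ → Set X, (∀ k, (f k)ᶜ ∈ SigmaClass X (n + 1)) ∧ s = ⋃ k, f k}

/-- `PiClass X n` is `Π⁰_n`: complements of `Σ⁰_n` sets. -/
def PiClass (X : Type*) [TopologicalSpace X] (n : ℕ) : Set (Set X) :=
  {s | sᶜ ∈ SigmaClass X n}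

/-- Baire property: differs from an open set by a meager set. -/
def HasBP {α : Type*} [TopologicalSpace α] (s : Set α) : Prop :=
  ∃ u : Set α, IsOpen u ∧ IsMeagre (symmDiff s u)

/-- Hereditary Baire property of an ideal on `ω`. -/
def HereditaryBP (I : Set (Set ℕ)) : Prop :=
  ∀ A : Set ℕ, A ∉ I → HasBP (chiSet {S : Set ℕ | ∃ T ∈ I, S = T ∩ A})

/-- Simply analytic subset of a topological space: the projection of a Borel subset of
`X × Y` for some uncountable Polish space `Y`. -/
def SAnalytic {X : Type*} [TopologicalSpace X] (A : Set X) : Prop :=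
  ∃ (Y : Type) (tY : TopologicalSpace Y), @PolishSpace Y tY ∧ ¬Countable Y ∧
    ∃ B : Set (X × Y),
      MeasurableSet[@borel (X × Y) (@instTopologicalSpaceProd X Y _ tY)] B ∧
      A = Prod.fst '' B

/-- `P⁺`-ideal. -/
def PPlusIdeal (I : Set (Set ℕ)) : Prop :=
  ∀ A : ℕ → Set ℕ, Antitone A → (∀ n, A n ∉ I) →
    ∃ B : Set ℕ, B ∉ I ∧ ∀ n, (B \ A n).Finite

/-- `P`-ideal. -/
def PIdeal (I : Set (Set ℕ)) : Prop :=
  ∀ A : ℕ → Set ℕ, (∀ n, A n ∈ I) → ∃ B ∈ I, ∀ n, (A n \ B).Finite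

/-- `L_{x↾A}`: the set of limit points of the subsequence of `x` indexed by `A`. -/
def LimSet {X : Type*} [TopologicalSpace X] (x : ℕ → X) (A : Set ℕ) : Set X :=
  {η | ∃ B ⊆ A, B.Infinite ∧ ConvAlong x B η}

/-- The ideal `I_W` attached to a sequence `x` and a set `W`. -/
def IdealW {X : Type*} [TopologicalSpace X] (x : ℕ → X) (W : Set X) : Set (Set ℕ) :=
  {A : Set ℕ | LimSet x A ∩ W = ∅}

/-- Rudin–Blass ordering on ideals. -/
def RudinBlassLE {Z W : Type*} (I : Set (Set Z)) (J : Set (Set W)) : Prop :=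
  ∃ φ : W → Z, (∀ z : Z, (φ ⁻¹' {z}).Finite) ∧ ∀ S : Set Z, S ∈ I ↔ φ ⁻¹' S ∈ J

/-- `Π⁰₃`-hardness of a subset of the Cantor space. -/
def Pi03Hard (B : Set (ℕ → Bool)) : Prop :=
  ∀ A ∈ PiClass (ℕ → Bool) 3, ∃ Φ : (ℕ → Bool) → (ℕ → Bool), Continuous Φ ∧ Φ ⁻¹' B = A


/-!
If `W` is not closed, pick `η ∈ closure W \ W` and points `w j ∈ W` tending to `η` with pairwise
disjoint neighbourhoods. Every point of the Cantor space is a cluster point of `x`, so each `w j` is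
the limit of a column of indices inside its neighbourhood; sending the `j`-th column to `{j} × ℕ`
witnesses `∅ × Fin ≤_RB I_W`, because a set meeting every column finitely converges to `η ∉ W`.
Rudin–Blass reductions then transfer from `∅ × Fin` both `Π⁰₃`-hardness (every `Σ⁰₂` set reduces
continuously to `Fin`, column by column) and the property that every `Σ⁰₂` set is a set of
limit points.

If `W` is closed, hence compact, then `A ∈ I_W` iff along `A` the sequence `x` eventually avoids
some `1/(k+1)`-thickening of `W`, so `I_W` is `Σ⁰₂`; by the Baire category theorem the sequences
with infinite support are not `Σ⁰₂`, so `I_W` is not `Π⁰₃`-hard. Moreover each `Λ_y(I_W)` is the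
projection of the compact set of cluster points of `(x n, y n)` lying over `W`, hence closed, while
the finitely supported sequences form a `Σ⁰₂` set that is neither empty nor closed.
-/

open Filter Function TopologicalSpace

section ConvAlong

variable {Z X : Type*} [TopologicalSpace X]

theorem convAlong_iff_tendsto {x : Z → X} {B : Set Z} {η : X} :
    ConvAlong x B η ↔ Tendsto x (cofinite ⊓ 𝓟 B) (𝓝 η) := by
  simp only [ConvAlong, tendsto_def, mem_inf_principal, mem_cofinite, compl_ofPred,
    Classical.not_imp, mem_preimage]

theorem ConvAlong.mono {x : Z → X} {A B : Set Z} {η : X} (h : ConvAlong x B η) (hAB : A ⊆ B) :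
    ConvAlong x A η := fun U hU => (h U hU).subset fun _ hn => ⟨hAB hn.1, hn.2⟩

theorem convAlong_range {x : Z → X} {u : ℕ → Z} {η : X} (h : Tendsto (x ∘ u) atTop (𝓝 η)) :
    ConvAlong x (range u) η := by
  intro U hU
  have hfin : ((x ∘ u) ⁻¹' U)ᶜ.Finite := by
    rw [← mem_cofinite, Nat.cofinite_eq_atTop]
    exact h hU
  refine (hfin.image u).subset ?_
  rintro _ ⟨⟨k, rfl⟩, hk⟩
  exact ⟨k, hk, rfl⟩

theorem tendsto_cofinite_inf_principal {u : ℕ → Z} (hu : Injective u) {A : Set Z}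
    (huA : ∀ k, u k ∈ A) : Tendsto u atTop (cofinite ⊓ 𝓟 A) :=
  tendsto_inf.2 ⟨Nat.cofinite_eq_atTop ▸ hu.tendsto_cofinite,
    tendsto_principal.2 (Eventually.of_forall huA)⟩

theorem mem_limSet_iff {x : ℕ → X} {A : Set ℕ} {η : X} :
    η ∈ LimSet x A ↔ ∃ u : ℕ → ℕ, StrictMono u ∧ (∀ k, u k ∈ A) ∧ Tendsto (x ∘ u) atTop (𝓝 η) := by
  constructor
  · rintro ⟨B, hBA, hB, hconv⟩
    have hmono := Nat.nth_strictMono hB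
    refine ⟨Nat.nth (· ∈ B), hmono, fun k => hBA (Nat.nth_mem_of_infinite hB k), ?_⟩
    exact (convAlong_iff_tendsto.1 hconv).comp
      (tendsto_cofinite_inf_principal hmono.injective (Nat.nth_mem_of_infinite hB))
  · rintro ⟨u, hu, huA, hconv⟩
    exact ⟨range u, range_subset_iff.2 huA, infinite_range_of_injective hu.injective,
      convAlong_range hconv⟩

theorem limSet_univ_eq [FirstCountableTopology X] (x : ℕ → X) :
    LimSet x univ = {η | MapClusterPt η atTop x} := by
  ext η
  rw [mem_limSet_iff]
  constructor
  · rintro ⟨u, hu, -, h⟩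
    exact h.mapClusterPt.of_comp hu.tendsto_atTop
  · intro h
    obtain ⟨u, hu, hconv⟩ := h.tendsto_subseq
    exact ⟨u, hu, fun _ => trivial, hconv⟩

theorem limSet_subset_singleton [T2Space X] {x : ℕ → X} {C : Set ℕ} {η : X}
    (h : ConvAlong x C η) : LimSet x C ⊆ {η} := by
  rintro a ⟨B, hBC, hB, ha⟩
  have := hB.cofinite_inf_principal_neBot
  exact tendsto_nhds_unique (convAlong_iff_tendsto.1 ha) (convAlong_iff_tendsto.1 (h.mono hBC))

end ConvAlong

section IdealW

variable {X : Type*} [TopologicalSpace X] {x : ℕ → X} {W : Set X}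

theorem idealW_mono {A B : Set ℕ} (hAB : A ⊆ B) (hB : B ∈ IdealW x W) : A ∈ IdealW x W :=
  eq_empty_of_subset_empty fun _ ⟨⟨C, hCA, hC⟩, hW⟩ => hB.subset ⟨⟨C, hCA.trans hAB, hC⟩, hW⟩

theorem finite_mem_idealW {A : Set ℕ} (hA : A.Finite) : A ∈ IdealW x W :=
  eq_empty_of_subset_empty fun _ ⟨⟨_, hBA, hB, _⟩, _⟩ => hB (hA.subset hBA)

theorem notMem_idealW_of_mem {A : Set ℕ} {w : X} (hw : w ∈ LimSet x A) (hwW : w ∈ W) :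
    A ∉ IdealW x W := fun hA => hA.subset ⟨hw, hwW⟩

end IdealW

section BorelClasses

variable {X Y : Type*} [TopologicalSpace X] [TopologicalSpace Y]

theorem mem_sigmaClass_two_iff {s : Set X} :
    s ∈ SigmaClass X 2 ↔ ∃ F : ℕ → Set X, (∀ k, IsClosed (F k)) ∧ s = ⋃ k, F k := by
  simp only [SigmaClass, mem_ofPred_eq, isOpen_compl_iff]

theorem iUnion_mem_sigmaClass_two {ι : Type*} [Countable ι] {F : ι → Set X}
    (hF : ∀ i, IsClosed (F i)) : ⋃ i, F i ∈ SigmaClass X 2 := by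
  rw [mem_sigmaClass_two_iff]
  rcases isEmpty_or_nonempty ι with hι | hι
  · exact ⟨fun _ => ∅, fun _ => isClosed_empty, by simp⟩
  · obtain ⟨g, hg⟩ := exists_surjective_nat ι
    exact ⟨F ∘ g, fun k => hF (g k), (hg.iUnion_comp F).symm⟩

theorem preimage_mem_sigmaClass_two {f : X → Y} (hf : Continuous f) {s : Set Y}
    (hs : s ∈ SigmaClass Y 2) : f ⁻¹' s ∈ SigmaClass X 2 := by
  obtain ⟨F, hF, rfl⟩ := mem_sigmaClass_two_iff.1 hs
  rw [preimage_iUnion]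
  exact iUnion_mem_sigmaClass_two fun k => (hF k).preimage hf

theorem IsOpen.mem_sigmaClass_two [PseudoMetrizableSpace X] {U : Set X} (hU : IsOpen U) :
    U ∈ SigmaClass X 2 := by
  obtain ⟨G, hG, hUG⟩ := isGδ_iff_eq_iInter_nat.1 hU.isClosed_compl.isGδ
  rw [← compl_compl U, hUG, compl_iInter]
  exact iUnion_mem_sigmaClass_two fun k => (hG k).isClosed_compl

theorem isGδ_compl_of_mem_sigmaClass_two {s : Set X} (hs : s ∈ SigmaClass X 2) : IsGδ sᶜ := by
  obtain ⟨F, hF, rfl⟩ := mem_sigmaClass_two_iff.1 hs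
  rw [compl_iUnion]
  exact IsGδ.iInter_of_isOpen fun k => (hF k).isOpen_compl

theorem mem_piClass_three_iff {s : Set X} :
    s ∈ PiClass X 3 ↔ ∃ G : ℕ → Set X, (∀ k, G k ∈ SigmaClass X 2) ∧ s = ⋂ k, G k := by
  refine ⟨fun ⟨F, hF, hsF⟩ => ⟨fun k => (F k)ᶜ, hF, ?_⟩,
    fun ⟨G, hG, hsG⟩ => ⟨fun k => (G k)ᶜ, ?_, ?_⟩⟩
  · rw [← compl_iUnion, ← hsF, compl_compl]
  · simpa using hG
  · rw [hsG, compl_iInter]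

theorem compl_mem_piClass_three [PseudoMetrizableSpace X] {s : Set X}
    (hs : s ∈ SigmaClass X 2) : sᶜ ∈ PiClass X 3 := by
  obtain ⟨F, hF, rfl⟩ := mem_sigmaClass_two_iff.1 hs
  exact mem_piClass_three_iff.2 ⟨fun k => (F k)ᶜ, fun k => (hF k).isOpen_compl.mem_sigmaClass_two,
    compl_iUnion F⟩

theorem notMem_sigmaClass_two_of_isGδ [BaireSpace X] [Nonempty X] {s : Set X} (hs : IsGδ s)
    (hd : Dense s) (hdc : Dense sᶜ) : s ∉ SigmaClass X 2 := by
  intro hσ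
  obtain ⟨F, hF, hsF⟩ := mem_sigmaClass_two_iff.1 hσ
  refine not_isMeagre_of_isGδ_of_dense hs hd (hsF ▸ isMeagre_iUnion fun k => ?_)
  refine ((hF k).isNowhereDense_iff.2 (interior_eq_empty_iff_dense_compl.2 ?_)).isMeagre
  exact hdc.mono (compl_subset_compl.2 (hsF ▸ subset_iUnion F k))

end BorelClasses

section Cantor

theorem tendsto_ite_lt_atTop {α : Type*} [TopologicalSpace α] (f g : ℕ → α) :
    Tendsto (fun n k => if k < n then f k else g k) atTop (𝓝 f) :=
  tendsto_pi_nhds.2 fun k => tendsto_const_nhds.congr'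
    ((eventually_gt_atTop k).mono fun _ hn => (if_pos hn).symm)

instance {α : Type*} [TopologicalSpace α] [Nontrivial α] : PerfectSpace (ℕ → α) := by
  refine perfectSpace_iff_forall_not_isolated.2 fun f => ?_
  choose g hg using fun k => exists_ne (f k)
  refine (tendsto_nhdsWithin_iff.2
    ⟨tendsto_ite_lt_atTop f g, Eventually.of_forall fun n => ?_⟩).neBot
  exact fun h => hg n (by simpa using congrFun h n)

theorem finite_setOf_nat_iff {p : ℕ → Prop} : {n | p n}.Finite ↔ ∃ m, ∀ n ≥ m, ¬p n := by
  rw [← not_infinite, ← Nat.frequently_atTop_iff_infinite, not_frequently, eventually_atTop]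

theorem isClosed_setOf_forall_ge_not_true (P : ℕ → Prop) (m : ℕ) :
    IsClosed {f : ℕ → Bool | ∀ n ≥ m, ¬(f n = true ∧ P n)} := by
  simp only [ofPred_forall]
  refine isClosed_iInter fun n => isClosed_iInter fun _ => IsOpen.isClosed_compl ?_
  exact ((isOpen_discrete {true}).preimage (continuous_apply (A := fun _ : ℕ => Bool) n)).inter
    isOpen_const

theorem setOf_finite_and_eq_iUnion (P : ℕ → Prop) :
    {f : ℕ → Bool | {n | f n = true ∧ P n}.Finite} =
      ⋃ m, {f : ℕ → Bool | ∀ n ≥ m, ¬(f n = true ∧ P n)} := by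
  ext f
  simp only [mem_ofPred_eq, mem_iUnion, finite_setOf_nat_iff]

theorem setOf_finite_true_mem_sigmaClass_two :
    {f : ℕ → Bool | {n | f n = true}.Finite} ∈ SigmaClass (ℕ → Bool) 2 := by
  have := iUnion_mem_sigmaClass_two (isClosed_setOf_forall_ge_not_true fun _ => True)
  rw [← setOf_finite_and_eq_iUnion] at this
  simpa using this

theorem dense_setOf_finite_true : Dense {f : ℕ → Bool | {n | f n = true}.Finite} := fun f =>
  mem_closure_of_tendsto (tendsto_ite_lt_atTop f fun _ => false) <| Eventually.of_forall fun n =>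
    (finite_Iio n).subset fun k hk => by_contra fun h => by simp [mem_Iio.not.1 h] at hk

theorem dense_setOf_infinite_true : Dense {f : ℕ → Bool | {n | f n = true}.Infinite} := fun f =>
  mem_closure_of_tendsto (tendsto_ite_lt_atTop f fun _ => true) <| Eventually.of_forall fun n =>
    (Ici_infinite n).mono fun k hk => by simp [show n ≤ k from hk]

theorem not_isClosed_setOf_finite_true : ¬IsClosed {f : ℕ → Bool | {n | f n = true}.Finite} := by
  intro h
  have htrue : (fun _ => true) ∈ {f : ℕ → Bool | {n | f n = true}.Finite} := by
    rw [← h.closure_eq, dense_setOf_finite_true.closure_eq]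
    exact mem_univ _
  exact infinite_univ (by simpa using htrue)

theorem setOf_infinite_true_mem_piClass_three :
    {f : ℕ → Bool | {n | f n = true}.Infinite} ∈ PiClass (ℕ → Bool) 3 := by
  simpa [compl_ofPred] using compl_mem_piClass_three setOf_finite_true_mem_sigmaClass_two

theorem setOf_infinite_true_notMem_sigmaClass_two :
    {f : ℕ → Bool | {n | f n = true}.Infinite} ∉ SigmaClass (ℕ → Bool) 2 := by
  have hc : {f : ℕ → Bool | {n | f n = true}.Infinite}ᶜ = {f | {n | f n = true}.Finite} := by
    simp [compl_ofPred]
  refine notMem_sigmaClass_two_of_isGδ ?_ dense_setOf_infinite_true (hc ▸ dense_setOf_finite_true)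
  rw [← compl_compl {f : ℕ → Bool | {n | f n = true}.Infinite}, hc]
  exact isGδ_compl_of_mem_sigmaClass_two setOf_finite_true_mem_sigmaClass_two

theorem notMem_sigmaClass_two_of_pi03Hard {B : Set (ℕ → Bool)} (h : Pi03Hard B) :
    B ∉ SigmaClass (ℕ → Bool) 2 := fun hB => by
  obtain ⟨Φ, hΦ, hΦB⟩ := h _ setOf_infinite_true_mem_piClass_three
  exact setOf_infinite_true_notMem_sigmaClass_two (hΦB ▸ preimage_mem_sigmaClass_two hΦ hB)

end Cantor

section Reduction

open PiNat

variable (F : ℕ → Set (ℕ → Bool))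

open scoped Classical in
/-- The number of candidates `F 0, F 1, …` rejected before time `i` in a search for one
containing `f`. -/
noncomputable def stage (f : ℕ → Bool) : ℕ → ℕ
  | 0 => 0
  | i + 1 => stage f i + if Disjoint (F (stage f i)) (cylinder f i) then 1 else 0

variable {F}

theorem stage_le_of_mem {m : ℕ} {f : ℕ → Bool} (hf : f ∈ F m) (i : ℕ) : stage F f i ≤ m := by
  induction i with
  | zero => exact Nat.zero_le m
  | succ i ih =>
    rcases ih.lt_or_eq with h | h
    · simp only [stage]
      split_ifs <;> omega
    · have : ¬Disjoint (F m) (cylinder f i) := not_disjoint_iff.2 ⟨f, hf, self_mem_cylinder f i⟩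
      simp [stage, this, h]

theorem stage_lt_of_disjoint {f : ℕ → Bool} {i j : ℕ} (hij : i < j)
    (hi : Disjoint (F (stage F f i)) (cylinder f i)) : stage F f i < stage F f j := by
  have hmono : Monotone (stage F f) := monotone_nat_of_le_succ fun k => by
    simp only [stage]
    omega
  calc stage F f i < stage F f (i + 1) := by simp [stage, hi]
    _ ≤ stage F f j := hmono hij

theorem stage_eq_of_mem_cylinder {f g : ℕ → Bool} {i : ℕ} (hg : g ∈ cylinder f i) :
    stage F g i = stage F f i := by
  induction i with
  | zero => rfl
  | succ i ih =>
    have hgi : g ∈ cylinder f i := cylinder_anti f i.le_succ hg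
    rw [stage, stage, ih hgi, mem_cylinder_iff_eq.1 hgi]

theorem finite_setOf_disjoint_iff (hF : ∀ m, IsClosed (F m)) (f : ℕ → Bool) :
    {i | Disjoint (F (stage F f i)) (cylinder f i)}.Finite ↔ f ∈ ⋃ m, F m := by
  constructor
  · intro hfin
    by_contra hf
    obtain ⟨N, hN⟩ := finite_setOf_nat_iff.1 hfin
    have hconst : ∀ i ≥ N, stage F f i = stage F f N := fun i hi => by
      induction i, hi using Nat.le_induction with
      | base => rfl
      | succ i hi ih =>
        have := hN i hi
        rw [ih] at this
        simp [stage, ih, this]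
    obtain ⟨n, hn⟩ :=
      exists_disjoint_cylinder (hF (stage F f N)) fun h => hf (mem_iUnion_of_mem _ h)
    refine hN (max N n) (le_max_left N n) ?_
    rw [hconst _ (le_max_left N n)]
    exact hn.mono_right (cylinder_anti f (le_max_right N n))
  · rintro hf
    obtain ⟨m, hm⟩ := mem_iUnion.1 hf
    refine Finite.of_finite_image (f := stage F f) ((finite_Iic m).subset ?_)
      fun i hi j hj (hij : stage F f i = stage F f j) => ?_
    · rintro _ ⟨i, -, rfl⟩
      exact stage_le_of_mem hm i
    · by_contra hne
      rcases Nat.lt_or_gt_of_ne hne with h | h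
      · exact (stage_lt_of_disjoint h hi).ne hij
      · exact (stage_lt_of_disjoint h hj).ne' hij

theorem exists_continuous_finite_iff_of_mem_sigmaClass_two {G : Set (ℕ → Bool)}
    (hG : G ∈ SigmaClass (ℕ → Bool) 2) :
    ∃ Φ : (ℕ → Bool) → ℕ → Bool, Continuous Φ ∧ ∀ f, {i | Φ f i = true}.Finite ↔ f ∈ G := by
  classical
  obtain ⟨F, hF, rfl⟩ := mem_sigmaClass_two_iff.1 hG
  refine ⟨fun f i => decide (Disjoint (F (stage F f i)) (cylinder f i)), ?_, fun f => ?_⟩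
  · refine continuous_pi fun i => ((IsLocallyConstant.iff_eventually_eq _).2 fun f => ?_).continuous
    filter_upwards [(isOpen_cylinder _ f i).mem_nhds (self_mem_cylinder f i)] with g hg
    rw [stage_eq_of_mem_cylinder hg, mem_cylinder_iff_eq.1 hg]
  · simpa using finite_setOf_disjoint_iff hF f

end Reduction

section Hardness

theorem mem_fubiniProd_iff {Z Z' : Type*} {S : Set (Z × Z')} :
    S ∈ FubiniProd ({∅} : Set (Set Z)) (FinIdeal Z') ↔ ∀ n, {k | (n, k) ∈ S}.Finite := by
  simp [FubiniProd, FinIdeal, eq_empty_iff_forall_notMem]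

theorem exists_continuous_preimage_fubiniProd_eq {A : Set (ℕ → Bool)}
    (hA : A ∈ PiClass (ℕ → Bool) 3) : ∃ Ψ : (ℕ → Bool) → ℕ × ℕ → Bool, Continuous Ψ ∧
      Ψ ⁻¹' chiSet (FubiniProd ({∅} : Set (Set ℕ)) (FinIdeal ℕ)) = A := by
  obtain ⟨G, hG, rfl⟩ := mem_piClass_three_iff.1 hA
  choose Φ hΦ hΦG using fun k => exists_continuous_finite_iff_of_mem_sigmaClass_two (hG k)
  refine ⟨fun f p => Φ p.1 f p.2, continuous_pi fun p => (continuous_apply p.2).comp (hΦ p.1), ?_⟩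
  ext f
  simp [chiSet, mem_fubiniProd_iff, hΦG]

theorem pi03Hard_of_rudinBlassLE {J : Set (Set ℕ)}
    (h : RudinBlassLE (FubiniProd ({∅} : Set (Set ℕ)) (FinIdeal ℕ)) J) : Pi03Hard (chiSet J) := by
  obtain ⟨φ, -, hφ⟩ := h
  intro A hA
  obtain ⟨Ψ, hΨ, hΨA⟩ := exists_continuous_preimage_fubiniProd_eq hA
  refine ⟨fun f => Ψ f ∘ φ, continuous_pi fun n => (continuous_apply (φ n)).comp hΨ, ?_⟩
  rw [← hΨA]
  ext f
  exact (hφ {p | Ψ f p = true}).symm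

end Hardness

section LimitFamily

variable {X : Type*} [TopologicalSpace X]

theorem lambdaSet_comp_of_rudinBlassLE {Z Z' : Type*} {I : Set (Set Z)} {J : Set (Set Z')}
    {φ : Z' → Z} (hφ : ∀ z, (φ ⁻¹' {z}).Finite) (hIJ : ∀ S, S ∈ I ↔ φ ⁻¹' S ∈ J)
    (hJ_mono : ∀ A B, A ⊆ B → B ∈ J → A ∈ J) (hJ_fin : ∀ A : Set Z', A.Finite → A ∈ J)
    (z : Z → X) : LambdaSet (z ∘ φ) J = LambdaSet z I := by
  ext η
  constructor
  · rintro ⟨A, hAJ, hA, hconv⟩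
    have hAφ : A ⊆ φ ⁻¹' (φ '' A) := subset_preimage_image φ A
    refine ⟨φ '' A, fun h => hAJ (hJ_mono _ _ hAφ ((hIJ _).1 h)),
      fun h => hA ((h.preimage' fun z _ => hφ z).subset hAφ), fun U hU => ?_⟩
    refine ((hconv U hU).image φ).subset ?_
    rintro _ ⟨⟨n, hn, rfl⟩, hnU⟩
    exact ⟨n, ⟨hn, hnU⟩, rfl⟩
  · rintro ⟨B, hBI, -, hconv⟩
    have hBJ : φ ⁻¹' B ∉ J := fun h => hBI ((hIJ B).2 h)
    exact ⟨φ ⁻¹' B, hBJ, fun h => hBJ (hJ_fin _ h), fun U hU =>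
      (hconv U hU).preimage' fun z _ => hφ z⟩

theorem limitFamily_subset_of_rudinBlassLE {Z Z' : Type*} {I : Set (Set Z)} {J : Set (Set Z')}
    (hIJ : RudinBlassLE I J) (hJ_mono : ∀ A B, A ⊆ B → B ∈ J → A ∈ J)
    (hJ_fin : ∀ A : Set Z', A.Finite → A ∈ J) : LimitFamily Z X I ⊆ LimitFamily Z' X J := by
  obtain ⟨φ, hφ, hφIJ⟩ := hIJ
  rintro S (⟨z, rfl⟩ | hS)
  · exact .inl ⟨z ∘ φ, (lambdaSet_comp_of_rudinBlassLE hφ hφIJ hJ_mono hJ_fin z).symm⟩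
  · exact .inr hS

theorem exists_seq_forall_mapClusterPt [SecondCountableTopology X] {s : Set X}
    (hs : s.Nonempty) : ∃ c : ℕ → X, (∀ i, c i ∈ s) ∧ ∀ a ∈ s, MapClusterPt a atTop c := by
  have := hs.to_subtype
  obtain ⟨d, hd⟩ := exists_dense_seq s
  refine ⟨fun i => d (Nat.unpair i).1, fun i => (d _).2, fun a ha => ?_⟩
  refine mapClusterPt_iff_frequently.2 fun U hU => frequently_atTop.2 fun N => ?_
  obtain ⟨_, ⟨k, rfl⟩, hk⟩ := hd.inter_nhds_nonempty
    (continuous_subtype_val.continuousAt.preimage_mem_nhds (x := ⟨a, ha⟩) hU)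
  exact ⟨Nat.pair k N, Nat.right_le_pair k N, by simpa using hk⟩

theorem sigmaClass_two_subset_limitFamily_fubiniProd [SecondCountableTopology X] :
    SigmaClass X 2 ⊆ LimitFamily (ℕ × ℕ) X (FubiniProd ({∅} : Set (Set ℕ)) (FinIdeal ℕ)) := by
  intro S hS
  obtain ⟨F, hF, rfl⟩ := mem_sigmaClass_two_iff.1 hS
  rcases eq_empty_or_nonempty (⋃ m, F m) with hS | ⟨p, hp⟩
  · exact .inr hS
  obtain ⟨m₀, hm₀⟩ := mem_iUnion.1 hp
  -- pad every piece with `F m₀`, so that each is nonempty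
  have hU : ⋃ m, F m = ⋃ m, (F m ∪ F m₀) :=
    subset_antisymm (iUnion_mono fun m => subset_union_left)
      (iUnion_subset fun m => union_subset (subset_iUnion F m) (subset_iUnion F m₀))
  choose c hcF hc using fun m => exists_seq_forall_mapClusterPt (s := F m ∪ F m₀) ⟨p, .inr hm₀⟩
  refine .inl ⟨fun q => c q.1 q.2, ?_⟩
  rw [hU]
  ext a
  constructor
  · intro ha
    obtain ⟨m, ham⟩ := mem_iUnion.1 ha
    obtain ⟨u, hu, hcu⟩ := (hc m a ham).tendsto_subseq
    refine ⟨range fun i => (m, u i), fun h => ?_,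
      infinite_range_of_injective fun i j hij => hu.injective (Prod.ext_iff.1 hij).2,
      convAlong_range hcu⟩
    refine infinite_range_of_injective hu.injective ((mem_fubiniProd_iff.1 h m).subset ?_)
    rintro _ ⟨i, rfl⟩
    exact ⟨i, rfl⟩
  · rintro ⟨A, hA, -, hconv⟩
    obtain ⟨m, hm⟩ : ∃ m, {k | (m, k) ∈ A}.Infinite := by
      simpa [mem_fubiniProd_iff] using hA
    have hB : (A ∩ {q | q.1 = m}).Infinite := by
      refine (hm.image (f := Prod.mk m) fun i _ j _ hij => (Prod.ext_iff.1 hij).2).mono ?_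
      rintro _ ⟨k, hk, rfl⟩
      exact ⟨hk, rfl⟩
    have := hB.cofinite_inf_principal_neBot
    have hclosure := mem_closure_of_tendsto ((convAlong_iff_tendsto.1 hconv).mono_left
      (inf_le_inf_left _ (principal_mono.2 inter_subset_left)))
      (mem_inf_of_right (mem_principal.2 fun q (hq : q ∈ A ∩ {q | q.1 = m}) =>
        show c q.1 q.2 ∈ F m ∪ F m₀ by rw [← hq.2]; exact hcF _ _))
    exact mem_iUnion.2 ⟨m, ((hF m).union (hF m₀)).closure_eq ▸ hclosure⟩

end LimitFamily

theorem mem_idealW_iff_finite_thickening {X : Type*} [MetricSpace X] {x : ℕ → X} {W : Set X}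
    (hW : IsCompact W) {A : Set ℕ} :
    A ∈ IdealW x W ↔ ∃ k : ℕ, {n | n ∈ A ∧ x n ∈ Metric.thickening (1 / (k + 1)) W}.Finite := by
  constructor
  · intro hA
    by_contra! h
    obtain ⟨u, hu, huA⟩ := extraction_forall_of_frequently fun k =>
      Nat.frequently_atTop_iff_infinite.2 (h k)
    choose w hwW hw using fun k => Metric.mem_thickening_iff.1 (huA k).2
    obtain ⟨a, haW, ψ, hψ, hwa⟩ := hW.tendsto_subseq hwW
    have hdist : Tendsto (fun k => dist (w (ψ k)) (x (u (ψ k)))) atTop (𝓝 0) :=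
      squeeze_zero (fun _ => dist_nonneg) (fun k => by rw [dist_comm]; exact (hw (ψ k)).le)
        (tendsto_one_div_add_atTop_nhds_zero_nat.comp hψ.tendsto_atTop)
    exact notMem_idealW_of_mem (mem_limSet_iff.2 ⟨u ∘ ψ, hu.comp hψ, fun k => (huA (ψ k)).1,
      tendsto_of_tendsto_of_dist hwa hdist⟩) haW hA
  · rintro ⟨k, hk⟩
    refine eq_empty_of_subset_empty fun a ⟨ha, haW⟩ => ?_
    obtain ⟨u, hu, huA, hxu⟩ := mem_limSet_iff.1 ha
    have hev : ∀ᶠ j in atTop, x (u j) ∈ Metric.thickening (1 / (k + 1)) W :=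
      hxu (Metric.isOpen_thickening.mem_nhds (Metric.self_subset_thickening (by positivity) W haW))
    exact (Nat.frequently_atTop_iff_infinite.1 hev.frequently)
      ((hk.preimage hu.injective.injOn).subset fun j hj => ⟨huA j, hj⟩)

section ClosedW

variable {X : Type*} [TopologicalSpace X] {x : ℕ → X} {W : Set X}

theorem lambdaSet_idealW_eq {Y : Type*} [TopologicalSpace Y] (y : ℕ → Y) :
    LambdaSet y (IdealW x W) = Prod.snd '' (LimSet (fun n => (x n, y n)) univ ∩ W ×ˢ univ) := by
  ext η
  constructor
  · rintro ⟨A, hAW, -, hconv⟩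
    obtain ⟨w, hwA, hwW⟩ := nonempty_iff_ne_empty.2 hAW
    obtain ⟨u, hu, huA, hxu⟩ := mem_limSet_iff.1 hwA
    have hyu :=
      (convAlong_iff_tendsto.1 hconv).comp (tendsto_cofinite_inf_principal hu.injective huA)
    exact ⟨(w, η), ⟨mem_limSet_iff.2 ⟨u, hu, fun _ => trivial, hxu.prodMk_nhds hyu⟩, hwW, trivial⟩,
      rfl⟩
  · rintro ⟨⟨w, η⟩, ⟨hL, hwW, -⟩, rfl⟩
    obtain ⟨u, hu, -, h⟩ := mem_limSet_iff.1 hL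
    refine ⟨range u, notMem_idealW_of_mem ?_ hwW, infinite_range_of_injective hu.injective,
      convAlong_range h.snd_nhds⟩
    exact mem_limSet_iff.2 ⟨u, hu, mem_range_self, h.fst_nhds⟩

theorem isClosed_lambdaSet_idealW [CompactSpace X] [FirstCountableTopology X] {Y : Type*}
    [TopologicalSpace Y] [CompactSpace Y] [FirstCountableTopology Y] [T2Space Y] (hW : IsClosed W)
    (y : ℕ → Y) : IsClosed (LambdaSet y (IdealW x W)) := by
  rw [lambdaSet_idealW_eq, limSet_univ_eq]
  exact ((isClosed_setOfPred_clusterPt.inter (hW.prod isClosed_univ)).isCompact.image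
    continuous_snd).isClosed

theorem chiSet_idealW_mem_sigmaClass_two [MetrizableSpace X] [CompactSpace X] (x : ℕ → X)
    (hW : IsClosed W) : chiSet (IdealW x W) ∈ SigmaClass (ℕ → Bool) 2 := by
  let := metrizableSpaceMetric X
  have : chiSet (IdealW x W) = ⋃ p : ℕ × ℕ,
      {f : ℕ → Bool | ∀ n ≥ p.2, ¬(f n = true ∧ x n ∈ Metric.thickening (1 / (p.1 + 1)) W)} := by
    ext f
    simp only [chiSet, mem_ofPred_eq, mem_idealW_iff_finite_thickening hW.isCompact, mem_iUnion,
      Prod.exists, finite_setOf_nat_iff]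
  rw [this]
  exact iUnion_mem_sigmaClass_two fun p => isClosed_setOf_forall_ge_not_true _ p.2

end ClosedW

section RudinBlass

theorem exists_pairwise_disjoint_nhds_tendsto {X : Type*} [MetricSpace X] {W : Set X} {η : X}
    (hη : η ∈ closure W) (hηW : η ∉ W) :
    ∃ (w : ℕ → X) (V : ℕ → Set X), (∀ j, w j ∈ W) ∧ (∀ j, V j ∈ 𝓝 (w j)) ∧
      Pairwise (Disjoint on V) ∧ Tendsto V atTop (𝓝 η).smallSets := by
  have hnext : ∀ z : W, ∃ z' : W, 3 * dist (z' : X) η < dist (z : X) η := fun z => by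
    have hpos : 0 < dist (z : X) η := dist_pos.2 (ne_of_mem_of_not_mem z.2 hηW)
    obtain ⟨b, hbW, hb⟩ := Metric.mem_closure_iff.1 hη _ (div_pos hpos three_pos)
    exact ⟨⟨b, hbW⟩, by rw [dist_comm] at hb; linarith⟩
  choose next hnext using hnext
  obtain ⟨w₀, hw₀⟩ := (mem_closure_iff_nhds.1 hη) univ univ_mem
  let w : ℕ → W := fun j => next^[j] ⟨w₀, hw₀.2⟩
  let d : ℕ → ℝ := fun j => dist (w j : X) η
  have hd_succ : ∀ j, 3 * d (j + 1) < d j := fun j => by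
    simp only [d, w, iterate_succ_apply']
    exact hnext _
  have hd_pos : ∀ j, 0 < d j := fun j => dist_pos.2 (ne_of_mem_of_not_mem (w j).2 hηW)
  have hd_anti : Antitone d :=
    antitone_nat_of_succ_le fun j => by linarith [hd_succ j, hd_pos (j + 1)]
  have hd_lim : Tendsto d atTop (𝓝 0) := by
    have hgeom : ∀ j, d j ≤ d 0 * (1 / 3) ^ j := fun j => by
      induction j with
      | zero => simp
      | succ j ih => rw [pow_succ]; linarith [hd_succ j]
    have hpow := tendsto_pow_atTop_nhds_zero_of_lt_one (r := (1 / 3 : ℝ)) (by norm_num) (by norm_num)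
    exact squeeze_zero (fun j => (hd_pos j).le) hgeom (by simpa using hpow.const_mul (d 0))
  refine ⟨fun j => w j, fun j => Metric.ball (w j) (d j / 3), fun j => (w j).2,
    fun j => Metric.ball_mem_nhds _ (by linarith [hd_pos j]), ?_, ?_⟩
  · refine (pairwise_disjoint_on _).2 fun j k hjk => Metric.ball_disjoint_ball ?_
    have hk : d k < d j / 3 := by linarith [hd_succ j, hd_anti (Nat.succ_le_of_lt hjk)]
    have htri : d j ≤ dist (w j : X) (w k) + d k := dist_triangle (w j : X) (w k) η
    linarith [hd_pos j]
  · refine tendsto_smallSets_iff.2 fun U hU => ?_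
    obtain ⟨ε, hε, hεU⟩ := Metric.mem_nhds_iff.1 hU
    filter_upwards [hd_lim.eventually (gt_mem_nhds (half_pos hε))] with j hj
    exact (Metric.ball_subset_ball' (by linarith)).trans hεU

theorem exists_strictMono_tendsto_mem {X : Type*} [TopologicalSpace X] [FirstCountableTopology X]
    {x : ℕ → X} {a : X} (ha : MapClusterPt a atTop x) {V : Set X} (hV : V ∈ 𝓝 a) :
    ∃ u : ℕ → ℕ, StrictMono u ∧ (∀ i, x (u i) ∈ V) ∧ Tendsto (x ∘ u) atTop (𝓝 a) := by
  obtain ⟨ψ, hψ, h⟩ := ha.tendsto_subseq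
  obtain ⟨N, hN⟩ := eventually_atTop.1 (h hV)
  exact ⟨fun i => ψ (i + N), hψ.comp (strictMono_id.add_const N), fun i => hN _ le_add_self,
    h.comp (tendsto_add_atTop_nat N)⟩

variable {X : Type*} [TopologicalSpace X] {x : ℕ → X} {W : Set X}

theorem convAlong_of_finite_diff_columns {η : X} {V : ℕ → Set X}
    (hV : Tendsto V atTop (𝓝 η).smallSets) {e : ℕ → ℕ → ℕ} (heV : ∀ j i, x (e j i) ∈ V j)
    {C : Set ℕ} (hC : ∀ J, (C \ ⋃ j ≥ J, range (e j)).Finite) : ConvAlong x C η := by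
  intro U hU
  obtain ⟨J, hJ⟩ := eventually_atTop.1 (tendsto_smallSets_iff.1 hV U hU)
  refine (hC J).subset fun n ⟨hnC, hnU⟩ => ⟨hnC, ?_⟩
  simp only [mem_iUnion, mem_range]
  rintro ⟨j, hj, i, rfl⟩
  exact hnU (hJ j hj (heV j i))

theorem exists_finite_preimage_leftInverse {E : ℕ × ℕ → ℕ} (hE : Injective E) :
    ∃ φ : ℕ → ℕ × ℕ, (∀ p, (φ ⁻¹' {p}).Finite) ∧ (∀ p, φ (E p) = p) ∧
      ∀ n ∉ range E, φ n = (0, n) := by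
  classical
  let φ : ℕ → ℕ × ℕ := fun n => if n ∈ range E then invFun E n else (0, n)
  have hφE : ∀ p, φ (E p) = p := fun p => by simp [φ, leftInverse_invFun hE p]
  have hφ_out : ∀ n ∉ range E, φ n = (0, n) := fun n hn => if_neg hn
  refine ⟨φ, fun p => ((finite_singleton p.2).insert (E p)).subset fun n (hn : φ n = p) => ?_,
    hφE, hφ_out⟩
  by_cases h : n ∈ range E
  · obtain ⟨q, rfl⟩ := h
    exact .inl (by rw [← hn, hφE])
  · exact .inr (by simp [← hn, hφ_out n h])

theorem rudinBlassLE_idealW_of_columns [T2Space X] {η : X} (hηW : η ∉ W) {w : ℕ → X}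
    (hw : ∀ j, w j ∈ W) {V : ℕ → Set X} (hVdisj : Pairwise (Disjoint on V))
    (hV : Tendsto V atTop (𝓝 η).smallSets) {e : ℕ → ℕ → ℕ} (he : ∀ j, StrictMono (e j))
    (heV : ∀ j i, x (e j i) ∈ V j) (hcol : ∀ j, Tendsto (x ∘ e j) atTop (𝓝 (w j))) :
    RudinBlassLE (FubiniProd ({∅} : Set (Set ℕ)) (FinIdeal ℕ)) (IdealW x W) := by
  let E : ℕ × ℕ → ℕ := fun p => e p.1 p.2
  have hE : Injective E := by
    rintro ⟨j, i⟩ ⟨k, l⟩ h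
    obtain rfl : j = k := by_contra fun hne =>
      (hVdisj hne).ne_of_mem (heV j i) (heV k l) (congrArg x h)
    exact Prod.ext rfl ((he j).injective h)
  obtain ⟨φ, hφ, hφE, hφ_out⟩ := exists_finite_preimage_leftInverse hE
  refine ⟨φ, hφ, fun S => ⟨fun hS => ?_, fun hS => ?_⟩⟩
  · -- `φ⁻¹ S` meets each column finitely, so `x` converges to `η ∉ W` along it
    rw [mem_fubiniProd_iff] at hS
    refine eq_empty_of_subset_empty fun a ⟨ha, haW⟩ => hηW ?_
    refine limSet_subset_singleton (convAlong_of_finite_diff_columns hV heV fun J => ?_) ha ▸ haW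
    refine ((hS 0).union (Finite.biUnion (finite_Iio J) fun j _ => (hS j).image (e j))).subset ?_
    rintro n ⟨hnS, hnJ⟩
    by_cases h : n ∈ range E
    · obtain ⟨⟨j, i⟩, rfl⟩ := h
      have hj : j < J := not_le.1 fun hj => hnJ (mem_biUnion hj ⟨i, rfl⟩)
      exact .inr (mem_biUnion hj ⟨i, by simpa [hφE] using hnS, rfl⟩)
    · exact .inl (by simpa [hφ_out n h] using hnS)
  · -- an infinite column of `S` pulls back to a subsequence converging to some `w j ∈ W`
    rw [mem_fubiniProd_iff]
    intro j
    by_contra hj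
    refine notMem_idealW_of_mem ⟨e j '' {i | (j, i) ∈ S}, ?_,
      Infinite.image (he j).injective.injOn hj,
      (convAlong_range (hcol j)).mono (image_subset_range _ _)⟩ (hw j) hS
    rintro _ ⟨i, hi, rfl⟩
    show φ (E (j, i)) ∈ S
    rwa [hφE]

theorem rudinBlassLE_idealW_of_not_isClosed [MetrizableSpace X]
    (hx : ∀ a, MapClusterPt a atTop x) (hW : ¬IsClosed W) :
    RudinBlassLE (FubiniProd ({∅} : Set (Set ℕ)) (FinIdeal ℕ)) (IdealW x W) := by
  let := metrizableSpaceMetric X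
  obtain ⟨η, hη, hηW⟩ := not_subset.1 (mt closure_subset_iff_isClosed.1 hW)
  obtain ⟨w, V, hw, hVw, hVdisj, hV⟩ := exists_pairwise_disjoint_nhds_tendsto hη hηW
  choose e he heV hcol using fun j => exists_strictMono_tendsto_mem (hx (w j)) (hVw j)
  exact rudinBlassLE_idealW_of_columns hηW hw hVdisj hV he heV hcol

end RudinBlass

theorem DenseRange.mapClusterPt {X : Type*} [TopologicalSpace X] [T1Space X] [PerfectSpace X]
    {x : ℕ → X} (hx : DenseRange x) (a : X) : MapClusterPt a atTop x := by
  refine mapClusterPt_iff_frequently.2 fun U hU =>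
    Nat.frequently_atTop_iff_infinite.2 fun hfin => ?_
  obtain ⟨_, hzU, ⟨n, rfl⟩, hn⟩ := (hx.sdiff_finite (hfin.image x)).inter_open_nonempty
    (interior U) isOpen_interior ⟨a, mem_interior_iff_mem_nhds.2 hU⟩
  exact hn ⟨n, (interior_subset hzU : x n ∈ U), rfl⟩

theorem stmt15_general (x : ℕ → (ℕ → Bool))
    (hrange : Set.range x = {f : ℕ → Bool | {k : ℕ | f k = true}.Finite})
    (W : Set (ℕ → Bool)) :
    (¬IsClosed W ↔ RudinBlassLE (FubiniProd ({∅} : Set (Set ℕ)) (FinIdeal ℕ)) (IdealW x W)) ∧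
    (¬IsClosed W ↔ Pi03Hard (chiSet (IdealW x W))) ∧
    (¬IsClosed W ↔ ∀ S ∈ SigmaClass (ℕ → Bool) 2,
      S ∈ LimitFamily ℕ (ℕ → Bool) (IdealW x W)) := by
  have hx : ∀ a, MapClusterPt a atTop x :=
    DenseRange.mapClusterPt (by rw [DenseRange, hrange]; exact dense_setOf_finite_true)
  have hRB : ¬IsClosed W → RudinBlassLE _ _ := rudinBlassLE_idealW_of_not_isClosed hx
  have hHard (h : Pi03Hard (chiSet (IdealW x W))) : ¬IsClosed W := fun hW =>
    notMem_sigmaClass_two_of_pi03Hard h (chiSet_idealW_mem_sigmaClass_two x hW)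
  refine ⟨⟨hRB, fun h => hHard (pi03Hard_of_rudinBlassLE h)⟩,
    ⟨fun h => pi03Hard_of_rudinBlassLE (hRB h), hHard⟩,
    ⟨fun h => sigmaClass_two_subset_limitFamily_fubiniProd.trans
      (limitFamily_subset_of_rudinBlassLE (hRB h) (fun _ _ => idealW_mono)
        fun _ => finite_mem_idealW),
    fun h hW => ?_⟩⟩
  rcases h _ setOf_finite_true_mem_sigmaClass_two with ⟨y, hy⟩ | hy
  · exact not_isClosed_setOf_finite_true (hy ▸ isClosed_lambdaSet_idealW hW y)
  · have hfalse : (fun _ => false) ∈ {f : ℕ → Bool | {n | f n = true}.Finite} := by simp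
    rwa [mem_singleton_iff.1 hy] at hfalse

/-- for nonempty `W ⊆ {0,1}^ω` with `I_W` having the hereditary Baire property,
the following are equivalent: `W` not closed; `∅×Fin ≤_RB I_W`; `I_W` is `Π⁰₃`-hard;
every `Σ⁰₂` subset of the Cantor space belongs to `𝓛(I_W)`. -/
theorem stmt15 (x : ℕ → (ℕ → Bool)) (hinj : Function.Injective x)
    (hrange : Set.range x = {f : ℕ → Bool | {k : ℕ | f k = true}.Finite})
    (hzero : x 0 = fun _ => false)
    (W : Set (ℕ → Bool)) (hW : W.Nonempty) (hBP : HereditaryBP (IdealW x W)) :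
    (¬IsClosed W ↔ RudinBlassLE (FubiniProd ({∅} : Set (Set ℕ)) (FinIdeal ℕ)) (IdealW x W)) ∧
    (¬IsClosed W ↔ Pi03Hard (chiSet (IdealW x W))) ∧
    (¬IsClosed W ↔ ∀ S ∈ SigmaClass (ℕ → Bool) 2,
      S ∈ LimitFamily ℕ (ℕ → Bool) (IdealW x W)) :=
  stmt15_general x hrange W
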